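/- Let n ≥ 6, let ψ : {1,…,n} → ℂ and let P be the homogeneous operator of degree 1 associated to ψ. Suppose P is a Reynolds operator, i.e. P(x)·P(y) = P(x·P(y) + P(x)·y − P(x)·P(y)) for all x, y ∈ A. Then ψ(n) = 0, and: (a) if there exists t with 1 ≤ t ≤ ⌊(n−2)/2⌋ and ψ(t) ≠ 0, and t is the least index with ψ(t) ≠ 0, then for every 1 ≤ i ≤ n−1: if (t+1) divides (i+1) then (i+1)·ψ(i) = (t+1)·ψ(t), and otherwise ψ(i) = 0; (b) if ψ(t) = 0 for all 1 ≤ t ≤ ⌊(n−2)/2⌋, then ψ is supported on at most two consecutive indices: for all r, s with ⌊(n−2)/2⌋ < r ≤ n−1, ⌊(n−2)/2⌋ < s ≤ n−1 and s ≥ r + 2, either ψ(r) = 0 or ψ(s) = 0. -/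
import Mathlib


open Finset

/-- Coordinate space of the `n`-dimensional complex null-filiform associative algebra,
with respect to the basis `e_1, …, e_n` (coordinate `m : Fin n` corresponds to `e_{m+1}`). -/
abbrev NF (n : ℕ) : Type := Fin n → ℂ

/-- Multiplication of the null-filiform algebra: `e_i · e_j = e_{i+j}` if `i + j ≤ n`
and `e_i · e_j = 0` if `i + j > n`, extended bilinearly. -/
noncomputable def nfMul {n : ℕ} (x y : NF n) : NF n :=
  fun m => ∑ i : Fin n, ∑ j : Fin n,
    if (i : ℕ) + (j : ℕ) + 1 = (m : ℕ) then x i * y j else 0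

/-- The basis element `e_k`, for `1 ≤ k ≤ n` (it is `0` if `k = 0` or `k > n`). -/
noncomputable def nfE (n k : ℕ) : NF n := fun m => if (m : ℕ) + 1 = k then 1 else 0

/-- The `k`-th power (for `k ≥ 1`) of an element of the null-filiform algebra. -/
noncomputable def nfPow {n : ℕ} (x : NF n) : ℕ → NF n
  | 0 => 0
  | 1 => x
  | k + 2 => nfMul (nfPow x (k + 1)) x


lemma nfE_mk (n k v : ℕ) (hv : v < n) : nfE n k ⟨v, hv⟩ = if v + 1 = k then 1 else 0 := rfl

lemma nfE_of_gt {n k : ℕ} (h : n + 1 ≤ k) : nfE n k = 0 := by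
  funext m
  simp only [nfE]
  rw [if_neg (by have := m.isLt; omega)]
  rfl

lemma nfMul_smul_left {n : ℕ} (c : ℂ) (x y : NF n) : nfMul (c • x) y = c • nfMul x y := by
  funext m
  simp only [nfMul, Pi.smul_apply, smul_eq_mul, Finset.mul_sum]
  refine Finset.sum_congr rfl fun i _ => Finset.sum_congr rfl fun j _ => ?_
  split_ifs <;> ring

lemma nfMul_smul_right {n : ℕ} (c : ℂ) (x y : NF n) : nfMul x (c • y) = c • nfMul x y := by
  funext m
  simp only [nfMul, Pi.smul_apply, smul_eq_mul, Finset.mul_sum]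
  refine Finset.sum_congr rfl fun i _ => Finset.sum_congr rfl fun j _ => ?_
  split_ifs <;> ring

lemma nfMul_e (n a b : ℕ) (ha : 1 ≤ a) (hb : 1 ≤ b) :
    nfMul (nfE n a) (nfE n b) = nfE n (a + b) := by
  funext m
  simp only [nfMul, nfE]
  by_cases han : a ≤ n
  · by_cases hbn : b ≤ n
    · rw [Finset.sum_eq_single (⟨a - 1, by omega⟩ : Fin n)]
      · rw [Finset.sum_eq_single (⟨b - 1, by omega⟩ : Fin n)]
        · simp only [Fin.val_mk]
          rw [if_pos (by omega : a - 1 + 1 = a), if_pos (by omega : b - 1 + 1 = b)]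
          by_cases h : (m : ℕ) + 1 = a + b
          · rw [if_pos (by omega), if_pos h, one_mul]
          · rw [if_neg (by omega), if_neg h]
        · intro j _ hj
          have : (j : ℕ) + 1 ≠ b := fun h => hj (Fin.ext (by simp; omega))
          rw [if_neg this]
          simp
        · intro h; exact absurd (Finset.mem_univ _) h
      · intro i _ hi
        have : (i : ℕ) + 1 ≠ a := fun h => hi (Fin.ext (by simp; omega))
        apply Finset.sum_eq_zero
        intro j _
        rw [if_neg this]
        simp
      · intro h; exact absurd (Finset.mem_univ _) h
    · rw [if_neg (by have := m.isLt; omega)]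
      apply Finset.sum_eq_zero; intro i _
      apply Finset.sum_eq_zero; intro j _
      rw [if_neg (show ¬((j:ℕ) + 1 = b) by have := j.isLt; omega)]
      simp
  · rw [if_neg (by have := m.isLt; omega)]
    apply Finset.sum_eq_zero; intro i _
    apply Finset.sum_eq_zero; intro j _
    rw [if_neg (show ¬((i:ℕ) + 1 = a) by have := i.isLt; omega)]
    simp

/-- Reynolds operator of degree `1` on the null-filiform algebra (`n ≥ 6`): `ψ(n) = 0`,
and (a) if `t` is the least index with `ψ(t) ≠ 0` and `1 ≤ t ≤ ⌊(n−2)/2⌋`, then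
`(i+1)ψ(i) = (t+1)ψ(t)` when `(t+1) ∣ (i+1)` and `ψ(i) = 0` otherwise; (b) if `ψ`
vanishes on `{1, …, ⌊(n−2)/2⌋}`, then `ψ` is supported on at most two consecutive
indices. -/
theorem reynolds_degree1 (n : ℕ) (hn : 6 ≤ n)
    (ψ : ℕ → ℂ) (P : NF n →ₗ[ℂ] NF n)
    (hP : ∀ i, 1 ≤ i → i ≤ n →
      P (nfE n i) = ψ i • nfE n (if i + 1 ≤ n then i + 1 else i + 1 - n))
    (hRey : ∀ x y : NF n,
      nfMul (P x) (P y) =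
        P (nfMul x (P y) + nfMul (P x) y - nfMul (P x) (P y))) :
    ψ n = 0 ∧
    (∀ t, 1 ≤ t → t ≤ (n - 2) / 2 → ψ t ≠ 0 →
      (∀ s, 1 ≤ s → s < t → ψ s = 0) →
      ∀ i, 1 ≤ i → i ≤ n - 1 →
        ((t + 1) ∣ (i + 1) → ((i : ℂ) + 1) * ψ i = ((t : ℂ) + 1) * ψ t) ∧
        (¬ (t + 1) ∣ (i + 1) → ψ i = 0)) ∧
    ((∀ t, 1 ≤ t → t ≤ (n - 2) / 2 → ψ t = 0) →
      ∀ r s, (n - 2) / 2 < r → r ≤ n - 1 → (n - 2) / 2 < s → s ≤ n - 1 →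
        r + 2 ≤ s → ψ r = 0 ∨ ψ s = 0) := by
  -- master equation
  have master : ∀ i j, 1 ≤ i → 1 ≤ j → i + j ≤ n - 2 →
      ψ j • ψ i • nfE n (i + j + 2)
        = ψ j • ψ (i + j + 1) • nfE n (i + j + 2)
          + ψ i • ψ (i + j + 1) • nfE n (i + j + 2)
          - ψ j • ψ i • ψ (i + j + 2) •
              nfE n (if i + j + 3 ≤ n then i + j + 3 else i + j + 3 - n) := by
    intro i j hi hj hij
    have h := hRey (nfE n i) (nfE n j)
    rw [hP i hi (by omega), hP j hj (by omega)] at h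
    rw [if_pos (show i + 1 ≤ n by omega), if_pos (show j + 1 ≤ n by omega)] at h
    simp only [nfMul_smul_left, nfMul_smul_right] at h
    rw [nfMul_e n i (j+1) hi (by omega), nfMul_e n (i+1) j (by omega) hj,
      nfMul_e n (i+1) (j+1) (by omega) (by omega)] at h
    rw [show i + (j+1) = i + j + 1 by omega, show i + 1 + j = i + j + 1 by omega,
      show i + 1 + (j+1) = i + j + 2 by omega] at h
    simp only [map_sub, map_add, map_smul] at h
    rw [hP (i+j+1) (by omega) (by omega), hP (i+j+2) (by omega) (by omega)] at h
    rw [if_pos (show i + j + 1 + 1 ≤ n by omega)] at h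
    rw [show i + j + 1 + 1 = i + j + 2 by omega,
      show i + j + 2 + 1 = i + j + 3 by omega, show i + j + 2 + 1 - n = i + j + 3 - n by omega] at h
    exact h
  have hR : ∀ i j, 1 ≤ i → 1 ≤ j → i + j ≤ n - 2 →
      ψ i * ψ j = (ψ i + ψ j) * ψ (i + j + 1) := by
    intro i j hi hj hij
    have hm := master i j hi hj hij
    have h := congrFun hm ⟨i + j + 1, by omega⟩
    simp only [Pi.add_apply, Pi.sub_apply, Pi.smul_apply, smul_eq_mul] at h
    rw [show nfE n (i+j+2) ⟨i+j+1, by omega⟩ = 1 by rw [nfE_mk]; rw [if_pos (by omega)]] at h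
    rw [show nfE n (if i + j + 3 ≤ n then i + j + 3 else i + j + 3 - n) ⟨i+j+1, by omega⟩ = 0 by
      rcases le_or_gt (i + j + 3) n with hc | hc
      · rw [if_pos hc, nfE_mk]; rw [if_neg (by omega)]
      · rw [if_neg (by omega), nfE_mk]; rw [if_neg (by omega)]] at h
    linear_combination h
  have hS : ∀ i j, 1 ≤ i → 1 ≤ j → i + j ≤ n - 3 →
      ψ i * ψ j * ψ (i + j + 2) = 0 := by
    intro i j hi hj hij
    have hm := master i j hi hj (by omega)
    have h := congrFun hm ⟨i + j + 2, by omega⟩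
    simp only [Pi.add_apply, Pi.sub_apply, Pi.smul_apply, smul_eq_mul] at h
    rw [show nfE n (i+j+2) ⟨i+j+2, by omega⟩ = 0 by rw [nfE_mk]; rw [if_neg (by omega)]] at h
    rw [show nfE n (if i + j + 3 ≤ n then i + j + 3 else i + j + 3 - n) ⟨i+j+2, by omega⟩ = 1 by
      rw [if_pos (by omega : i + j + 3 ≤ n), nfE_mk]; rw [if_pos (by omega)]] at h
    linear_combination h
  have hn0 : ψ n = 0 := by
    have h := hRey (nfE n n) (nfE n n)
    rw [hP n (by omega) le_rfl, if_neg (by omega), show n + 1 - n = 1 by omega] at h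
    simp only [nfMul_smul_left, nfMul_smul_right] at h
    rw [nfMul_e n n 1 (by omega) (by omega), nfMul_e n 1 n (by omega) (by omega),
      nfMul_e n 1 1 (by omega) (by omega)] at h
    rw [nfE_of_gt (le_refl (n+1)), nfE_of_gt (show n + 1 ≤ 1 + n by omega)] at h
    simp only [smul_zero, zero_add, zero_sub, map_neg, map_smul] at h
    rw [show (1:ℕ) + 1 = 2 from rfl, hP 2 (by omega) (by omega), if_pos (by omega)] at h
    have h2 := congrFun h ⟨1, by omega⟩
    simp only [Pi.neg_apply, Pi.smul_apply, smul_eq_mul] at h2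
    rw [show nfE n 2 ⟨1, by omega⟩ = 1 by rw [nfE_mk]; rw [if_pos rfl]] at h2
    rw [show nfE n (2+1) ⟨1, by omega⟩ = 0 by rw [nfE_mk]; rw [if_neg (by omega)]] at h2
    have : ψ n * ψ n = 0 := by linear_combination h2
    exact mul_self_eq_zero.mp this
  refine ⟨hn0, ?_, ?_⟩
  · -- part (a)
    intro t ht1 ht2 hψt hmin
    -- 2 ψ(2t+1) = ψ t
    have h2t1 : 2 * ψ (t + t + 1) = ψ t := by
      have h := hR t t ht1 ht1 (by omega)
      have h2 : ψ t * (2 * ψ (t + t + 1)) = ψ t * ψ t := by linear_combination -h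
      exact mul_left_cancel₀ hψt h2
    have h2t1ne : ψ (t + t + 1) ≠ 0 := fun hz => hψt (by rw [hz, mul_zero] at h2t1; exact h2t1.symm)
    -- ψ (t+1) = 0
    have ht1z : ψ (t + 1) = 0 := by
      rcases eq_or_lt_of_le ht1 with h1 | h1
      · -- t = 1
        have ht : t = 1 := h1.symm
        subst ht
        have h4 : ψ 4 = 0 := by
          have h := hS 1 1 le_rfl le_rfl (by omega)
          norm_num at h
          rcases h with h' | h'
          · exact absurd h' hψt
          · exact h'
        have h := hR 2 1 (by omega) le_rfl (by omega)
        rw [show (2:ℕ) + 1 + 1 = 4 from rfl, h4, mul_zero] at h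
        rcases mul_eq_zero.mp h with h' | h'
        · exact h'
        · exact absurd h' hψt
      · -- t ≥ 2
        have h := hR (t+1) (t-1) (by omega) (by omega) (by omega)
        rw [hmin (t-1) (by omega) (by omega), mul_zero, add_zero,
          show t + 1 + (t - 1) + 1 = t + t + 1 by omega] at h
        rcases mul_eq_zero.mp h.symm with h' | h'
        · exact h'
        · exact absurd h' h2t1ne
    have main : ∀ i, i ≤ n - 1 → 1 ≤ i →
        ((t + 1) ∣ (i + 1) → ((i : ℂ) + 1) * ψ i = ((t : ℂ) + 1) * ψ t) ∧
        (¬ (t + 1) ∣ (i + 1) → ψ i = 0) := by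
      intro i
      induction i using Nat.strong_induction_on with
      | _ i IH =>
        intro hin hi1
        rcases lt_trichotomy i t with hlt | heq | hgt
        · constructor
          · intro hdvd
            have := Nat.le_of_dvd (by omega) hdvd
            omega
          · intro _; exact hmin i hi1 hlt
        · subst heq
          exact ⟨fun _ => rfl, fun hnd => absurd dvd_rfl hnd⟩
        · by_cases hit : i = t + 1
          · subst hit
            constructor
            · intro hdvd
              have h1 : (t + 1) ∣ (t + 1 + 1 - (t + 1)) := Nat.dvd_sub hdvd dvd_rfl
              rw [show t + 1 + 1 - (t + 1) = 1 by omega] at h1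
              have := Nat.le_of_dvd one_pos h1
              omega
            · intro _; exact ht1z
          · -- i ≥ t + 2
            have hit2 : t + 2 ≤ i := by omega
            set j := i - t - 1 with hj
            have hj1 : 1 ≤ j := by omega
            have hji : j < i := by omega
            have hrel := hR t j ht1 hj1 (by omega)
            rw [show t + j + 1 = i by omega] at hrel
            have IHj := IH j hji (by omega) hj1
            constructor
            · intro hdvd
              have hdj : (t + 1) ∣ (j + 1) := by
                have h1 : (t + 1) ∣ (i + 1 - (t + 1)) := Nat.dvd_sub hdvd dvd_rfl
                rwa [show i + 1 - (t + 1) = j + 1 by omega] at h1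
              have hψj := IHj.1 hdj
              have hicast : (i : ℂ) = (t : ℂ) + 1 + (j : ℂ) := by
                have : i = t + 1 + j := by omega
                rw [this]; push_cast; ring
              apply mul_left_cancel₀ hψt
              linear_combination (-((j:ℂ)+1)) * hrel + (ψ t - ψ i) * hψj + (ψ t * ψ i) * hicast
            · intro hndvd
              have hdj : ¬ (t + 1) ∣ (j + 1) := by
                intro hd
                apply hndvd
                have : i + 1 = (j + 1) + (t + 1) := by omega
                rw [this]
                exact Nat.dvd_add hd dvd_rfl
              have hψj := IHj.2 hdj
              rw [hψj, mul_zero, add_zero] at hrel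
              rcases mul_eq_zero.mp hrel.symm with h' | h'
              · exact absurd h' hψt
              · exact h'
    intro i hi1 hi2
    exact main i hi2 hi1
  · -- part (b)
    intro hall r s hr1 hr2 hs1 hs2 hrs
    have hj1 : 1 ≤ s - r - 1 := by omega
    have h := hR r (s - r - 1) (by omega) hj1 (by omega)
    rw [show r + (s - r - 1) + 1 = s by omega,
      hall (s - r - 1) hj1 (by omega), mul_zero, add_zero] at h
    rcases mul_eq_zero.mp h.symm with h' | h'
    · left; exact h'
    · right; exact h'
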